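/- arXiv:2004.08872 — 2 statements merged into one kernel-verified Lean document; each statement's English description precedes it below -/
import Mathlib

section
/- (Lemma 2.2) Let A ∈ ℝ^{n1×n2×n3} be nonzero with an ordered t-SVD A = U * S * V^T, and let M₁ = U(:,1,:) * (S(1,1,:)/‖S(1,1,:)‖_F) * V(:,1,:)^T be the normalized leading rank-one tensor of A. Then ⟨M₁, A⟩ ≥ ‖A‖_F / √(min(n1,n2)). -/
/-!
Orthogonal factors preserve the Frobenius inner product, so `‖A‖_F = ‖S‖_F` and
`⟨M₁, A⟩ = ⟨S(1,1,:) / ‖S(1,1,:)‖_F, S(1,1,:)⟩ = ‖S(1,1,:)‖_F`. Since `S` is f-diagonal,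
`‖S‖_F²` is the sum of the squared norms of its `min(n1,n2)` diagonal tubes, and by Parseval
along the third mode the ordering of the Fourier-domain diagonals makes each of them at most
`‖S(1,1,:)‖_F²`.
-/

open scoped BigOperators Matrix Kronecker ComplexConjugate
open Complex

/-- A third-order tensor of size `n1 × n2 × n3` with entries in `R`. -/
abbrev T3 (n1 n2 n3 : ℕ) (R : Type*) : Type _ := Fin n1 → Fin n2 → Fin n3 → R

namespace T3

variable {n1 n2 n3 l : ℕ}

/-- The Frobenius inner product `⟨A,B⟩ = Σ_{i,j,k} A_{ijk} B_{ijk}`. -/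
def tInner (A B : T3 n1 n2 n3 ℝ) : ℝ := ∑ i, ∑ j, ∑ k, A i j k * B i j k

/-- The Frobenius norm `‖A‖_F = √⟨A,A⟩`. -/
noncomputable def tNorm (A : T3 n1 n2 n3 ℝ) : ℝ := Real.sqrt (tInner A A)

/-- The `n × n` DFT matrix, `(F_n)_{ab} = ω^{ab}` (0-based), `ω = exp(-2πi/n)`. -/
noncomputable def dftMatrix (n : ℕ) : Matrix (Fin n) (Fin n) ℂ :=
  fun a b => Complex.exp (-(2 * (Real.pi : ℂ) * Complex.I) / (n : ℂ)) ^ ((a : ℕ) * (b : ℕ))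

/-- The `k`-th frontal slice `Â^{(k)}` of the DFT of `A` along the third dimension:
`Â(i,j,:) = F_{n3} · A(i,j,:)`. -/
noncomputable def hatSlice (A : T3 n1 n2 n3 ℝ) (k : Fin n3) : Matrix (Fin n1) (Fin n2) ℂ :=
  fun i j => ∑ m : Fin n3, dftMatrix n3 k m * (A i j m : ℂ)

/-- The block circulant matrix of `A`: the `(p,q)` block (0-based) is the frontal
slice `A^{(p-q mod n3)}`. -/
def bcirc (A : T3 n1 n2 n3 ℝ) : Matrix (Fin n3 × Fin n1) (Fin n3 × Fin n2) ℝ :=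
  fun p q => A p.2 q.2 (p.1 - q.1)

/-- The block diagonal matrix with diagonal blocks `Â^{(1)}, …, Â^{(n3)}`. -/
noncomputable def bdiag (A : T3 n1 n2 n3 ℝ) : Matrix (Fin n3 × Fin n1) (Fin n3 × Fin n2) ℂ :=
  fun p q => if p.1 = q.1 then hatSlice A p.1 p.2 q.2 else 0

/-- t-product: `(A*B)^{(k)} = Σ_q A^{(k-q mod n3)} B^{(q)}` (circular convolution of slices). -/
def tprod (A : T3 n1 n2 n3 ℝ) (B : T3 n2 l n3 ℝ) : T3 n1 l n3 ℝ :=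
  fun i j k => ∑ q : Fin n3, ∑ p : Fin n2, A i p (k - q) * B p j q

/-- Tensor transpose: `(Aᵀ)^{(k)} = (A^{(-k mod n3)})ᵀ`. -/
def tT (A : T3 n1 n2 n3 ℝ) : T3 n2 n1 n3 ℝ := fun j i k => A i j (-k)

/-- The identity tensor: first frontal slice the identity matrix, other slices zero. -/
def tI (q m : ℕ) : T3 q q m ℝ := fun i j k => if i = j ∧ (k : ℕ) = 0 then 1 else 0

/-- An orthogonal tensor: `Qᵀ * Q = Q * Qᵀ = I`. -/
def TOrth {n m : ℕ} (Q : T3 n n m ℝ) : Prop :=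
  tprod (tT Q) Q = tI n m ∧ tprod Q (tT Q) = tI n m

/-- A partially orthogonal tensor: `Qᵀ * Q = I`. -/
def PartOrth {n q m : ℕ} (Q : T3 n q m ℝ) : Prop := tprod (tT Q) Q = tI q m

/-- f-diagonal tensor: every frontal slice is a diagonal matrix. -/
def FDiag (S : T3 n1 n2 n3 ℝ) : Prop :=
  ∀ (i : Fin n1) (j : Fin n2) (k : Fin n3), (i : ℕ) ≠ (j : ℕ) → S i j k = 0

/-- Every Fourier-domain frontal slice of `S` has real, nonnegative, nonincreasing
diagonal entries. -/
def OrderedDiag (S : T3 n1 n2 n3 ℝ) : Prop :=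
  ∀ k : Fin n3,
    (∀ (i : Fin n1) (j : Fin n2), (i : ℕ) = (j : ℕ) →
      (hatSlice S k i j).im = 0 ∧ 0 ≤ (hatSlice S k i j).re) ∧
    (∀ (i i' : Fin n1) (j j' : Fin n2), (i : ℕ) = (j : ℕ) → (i' : ℕ) = (j' : ℕ) →
      (i : ℕ) ≤ (i' : ℕ) → (hatSlice S k i' j').re ≤ (hatSlice S k i j).re)

/-- A t-SVD of `A`: `A = U * S * Vᵀ` with `U, V` orthogonal and `S` f-diagonal. -/
def IsTSVD (A : T3 n1 n2 n3 ℝ) (U : T3 n1 n1 n3 ℝ) (S : T3 n1 n2 n3 ℝ)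
    (V : T3 n2 n2 n3 ℝ) : Prop :=
  TOrth U ∧ TOrth V ∧ FDiag S ∧ A = tprod (tprod U S) (tT V)

/-- An ordered t-SVD. -/
def IsOrderedTSVD (A : T3 n1 n2 n3 ℝ) (U : T3 n1 n1 n3 ℝ) (S : T3 n1 n2 n3 ℝ)
    (V : T3 n2 n2 n3 ℝ) : Prop :=
  IsTSVD A U S V ∧ OrderedDiag S

/-- Lateral slice `U(:,i,:)` as an `n1 × 1 × n3` tensor. -/
def lat (U : T3 n1 n2 n3 ℝ) (i : Fin n2) : T3 n1 1 n3 ℝ := fun a _ k => U a i k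

/-- Tube `S(i,j,:)` as a `1 × 1 × n3` tensor. -/
def tube (S : T3 n1 n2 n3 ℝ) (i : Fin n1) (j : Fin n2) : T3 1 1 n3 ℝ := fun _ _ k => S i j k

/-- The rank-one term `U(:,i,:) * S(i,j,:) * V(:,j,:)ᵀ`. -/
def rankOne (U : T3 n1 n1 n3 ℝ) (S : T3 n1 n2 n3 ℝ) (V : T3 n2 n2 n3 ℝ)
    (i : Fin n1) (j : Fin n2) : T3 n1 n2 n3 ℝ :=
  tprod (tprod (lat U i) (tube S i j)) (tT (lat V j))

/-- The normalized leading rank-one tensor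
`M₁ = U(:,1,:) * (S(1,1,:)/‖S(1,1,:)‖_F) * V(:,1,:)ᵀ`. -/
noncomputable def leadM (hn1 : 0 < n1) (hn2 : 0 < n2) (U : T3 n1 n1 n3 ℝ)
    (S : T3 n1 n2 n3 ℝ) (V : T3 n2 n2 n3 ℝ) : T3 n1 n2 n3 ℝ :=
  tprod (tprod (lat U ⟨0, hn1⟩)
      (fun _ _ k => S ⟨0, hn1⟩ ⟨0, hn2⟩ k / tNorm (tube S ⟨0, hn1⟩ ⟨0, hn2⟩)))
    (tT (lat V ⟨0, hn2⟩))

/-- `‖Y‖_{1,F}`: the maximal Euclidean norm of a column fiber of a frontal slice of `Ŷ`. -/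
noncomputable def norm1F (Y : T3 n1 n2 n3 ℝ) : ℝ :=
  ⨆ p : Fin n2 × Fin n3, Real.sqrt (∑ i, ‖hatSlice Y p.2 i p.1‖ ^ 2)

/-- The tubal rank: the maximal rank of a frontal slice of the third-mode DFT. -/
noncomputable def tubalRank (X : T3 n1 n2 n3 ℝ) : ℕ :=
  Finset.univ.sup fun k : Fin n3 => (hatSlice X k).rank

end T3

open T3

open Finset Matrix

lemma geom_sum_eq_zero_of_pow_eq_one {R : Type*} [CommRing R] [IsDomain R] {n : ℕ} {μ : R}
    (hμn : μ ^ n = 1) (hμ : μ ≠ 1) : ∑ k ∈ range n, μ ^ k = 0 :=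
  eq_zero_of_ne_zero_of_mul_left_eq_zero (sub_ne_zero_of_ne hμ.symm)
    (by rw [mul_neg_geom_sum, hμn, sub_self])

lemma Fin.sum_sum_le_min_mul {n1 n2 : ℕ} {f : Fin n1 → Fin n2 → ℝ} {b : ℝ}
    (hoff : ∀ (i : Fin n1) (j : Fin n2), (i : ℕ) ≠ j → f i j = 0)
    (hdiag : ∀ (i : Fin n1) (j : Fin n2), (i : ℕ) = j → f i j ≤ b) :
    ∑ i, ∑ j, f i j ≤ min (n1 : ℝ) n2 * b := by
  calc ∑ i, ∑ j, f i j ≤ ∑ i : Fin n1, ∑ j : Fin n2, if (i : ℕ) = j then b else 0 :=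
        sum_le_sum fun i _ => sum_le_sum fun j _ => by
          split_ifs with h
          exacts [hdiag i j h, (hoff i j h).le]
    _ = min (n1 : ℝ) n2 * b := by
      have hrow : ∀ i : Fin n1, (∑ j : Fin n2, if (i : ℕ) = j then b else 0) =
          if (i : ℕ) ∈ range n2 then b else 0 := fun i => by
        rw [Fin.sum_univ_eq_sum_range (fun x => if (i : ℕ) = x then b else 0), sum_ite_eq]
      simp only [hrow]
      rw [Fin.sum_univ_eq_sum_range (fun x => if x ∈ range n2 then b else 0), sum_ite_mem,
        range_inter_range, Finset.sum_const, card_range, nsmul_eq_mul, Nat.cast_min]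

namespace T3

variable {n1 n2 n3 l m : ℕ}

/- `ω = exp(-2πi/n)` is a primitive `n`-th root of unity of modulus one, so `conj ω = ω⁻¹` and
the `(a, b)` entry is the geometric sum of `ω^(b-a)`, which vanishes unless `a = b`. -/
lemma dftMatrix_conjTranspose_mul_self (n : ℕ) :
    (dftMatrix n)ᴴ * dftMatrix n = (n : ℂ) • 1 := by
  obtain rfl | hn := eq_or_ne n 0
  · ext a; exact a.elim0
  set ω := Complex.exp (-(2 * (Real.pi : ℂ) * Complex.I) / (n : ℂ))
  have hF : ∀ a b : Fin n, dftMatrix n a b = ω ^ ((a : ℕ) * (b : ℕ)) := fun _ _ => rfl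
  have hω : IsPrimitiveRoot ω n := by
    simpa [ω, neg_div, Complex.exp_neg] using (Complex.isPrimitiveRoot_exp n hn).inv
  have hconj : star ω = ω⁻¹ := (Complex.inv_eq_conj (hω.norm'_eq_one hn)).symm
  ext a b
  set μ := ω⁻¹ ^ (a : ℕ) * ω ^ (b : ℕ)
  have hentry : ((dftMatrix n)ᴴ * dftMatrix n) a b = ∑ k ∈ range n, μ ^ k := by
    rw [← Fin.sum_univ_eq_sum_range (fun k => μ ^ k)]
    simp only [mul_apply, conjTranspose_apply, hF, star_pow, hconj]
    exact sum_congr rfl fun k _ => by ring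
  have hμn : μ ^ n = 1 := by
    rw [mul_pow, pow_right_comm, pow_right_comm ω, inv_pow, hω.pow_eq_one]
    simp
  rw [hentry, Matrix.smul_apply, one_apply]
  by_cases hab : a = b
  · subst hab
    simp [μ, hω.ne_zero hn]
  · have hμ : μ ≠ 1 := by
      intro h1
      apply hab
      have : ω ^ (b : ℕ) = ω ^ (a : ℕ) := by
        rw [← one_mul (ω ^ (a : ℕ)), ← h1, mul_right_comm, ← mul_pow,
          inv_mul_cancel₀ (hω.ne_zero hn), one_pow, one_mul]
      exact (Fin.ext (hω.pow_inj b.isLt a.isLt this)).symm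
    simp [geom_sum_eq_zero_of_pow_eq_one hμn hμ, hab]

lemma sum_normSq_dftMatrix_mulVec {n : ℕ} (x : Fin n → ℝ) :
    ∑ k, Complex.normSq ((dftMatrix n *ᵥ fun m => (x m : ℂ)) k) = n * ∑ m, x m ^ 2 := by
  set y : Fin n → ℂ := fun m => (x m : ℂ)
  have hstar : star y = y := by ext m; simp [y]
  have h : star (dftMatrix n *ᵥ y) ⬝ᵥ (dftMatrix n *ᵥ y) = (n : ℂ) * (y ⬝ᵥ y) := by
    rw [star_mulVec, ← dotProduct_mulVec, mulVec_mulVec, dftMatrix_conjTranspose_mul_self,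
      smul_mulVec, one_mulVec, hstar, dotProduct_smul, smul_eq_mul]
  apply Complex.ofReal_injective
  simpa [dotProduct, Complex.normSq_eq_conj_mul_self, y, sq] using h

lemma sum_normSq_hatSlice (A : T3 n1 n2 n3 ℝ) (i : Fin n1) (j : Fin n2) :
    ∑ k, Complex.normSq (hatSlice A k i j) = n3 * ∑ k, A i j k ^ 2 :=
  sum_normSq_dftMatrix_mulVec fun k => A i j k

lemma tInner_self_nonneg (A : T3 n1 n2 n3 ℝ) : 0 ≤ tInner A A :=
  sum_nonneg fun _ _ => sum_nonneg fun _ _ => sum_nonneg fun _ _ => mul_self_nonneg _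

lemma tInner_div_tNorm_self (X : T3 n1 n2 n3 ℝ) :
    tInner (fun a b k => X a b k / tNorm X) X = tNorm X := by
  have h : tInner (fun a b k => X a b k / tNorm X) X = tInner X X / tNorm X := by
    simp only [tInner, div_mul_eq_mul_div, sum_div]
  have hsq : tInner X X = tNorm X * tNorm X := (Real.mul_self_sqrt (tInner_self_nonneg X)).symm
  rw [h, hsq, mul_self_div_self]

lemma tInner_tube_self (S : T3 n1 n2 n3 ℝ) (i : Fin n1) (j : Fin n2) :
    tInner (tube S i j) (tube S i j) = ∑ k, S i j k ^ 2 := by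
  simp [tInner, tube, sq]

lemma tT_tT (A : T3 n1 n2 n3 ℝ) : tT (tT A) = A := by
  funext i j k
  simp [tT]

lemma tprod_lat (X : T3 n1 n2 n3 ℝ) (V : T3 n2 l n3 ℝ) (j : Fin l) :
    tprod X (lat V j) = lat (tprod X V) j := rfl

lemma tprod_tT_lat_lat (U : T3 n1 n2 n3 ℝ) (Y : T3 n1 l n3 ℝ) (i : Fin n2) (j : Fin l) :
    tprod (tT (lat U i)) (lat Y j) = tube (tprod (tT U) Y) i j := rfl

lemma TOrth.partOrth {n : ℕ} {Q : T3 n n n3 ℝ} (hQ : TOrth Q) : PartOrth Q := hQ.1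

section CyclicIndex

variable [NeZero n3]

lemma tI_tprod (X : T3 n1 n2 n3 ℝ) : tprod (tI n1 n3) X = X := by
  funext i j k
  simp [tprod, tI, ite_and, Fin.val_eq_zero_iff, sub_eq_zero]

lemma tprod_tI (X : T3 n1 n2 n3 ℝ) : tprod X (tI n2 n3) = X := by
  funext i j k
  simp [tprod, tI, ite_and, Fin.val_eq_zero_iff]

lemma tInner_tprod_left (A : T3 n1 n2 n3 ℝ) (B : T3 n2 l n3 ℝ) (C : T3 n1 l n3 ℝ) :
    tInner (tprod A B) C = tInner B (tprod (tT A) C) := by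
  simp only [tInner, tprod, tT, neg_sub, sum_mul, mul_sum, ← Fintype.sum_prod_type']
  refine Fintype.sum_equiv
    ⟨fun x => (x.2.2.2.2, x.2.1, x.2.2.2.1, x.2.2.1, x.1),
      fun x => (x.2.2.2.2, x.2.1, x.2.2.2.1, x.2.2.1, x.1), fun _ => rfl, fun _ => rfl⟩ _ _ ?_
  rintro ⟨i, j, k, q, p⟩
  dsimp only [Equiv.coe_fn_mk]
  ring

/- Here the summation variables `(k, q)` are reindexed by `(k - q, -q)`. -/
lemma tInner_tprod_right (A : T3 n1 n2 n3 ℝ) (B : T3 n2 l n3 ℝ) (C : T3 n1 l n3 ℝ) :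
    tInner (tprod A B) C = tInner A (tprod C (tT B)) := by
  simp only [tInner, tprod, tT, sum_mul, mul_sum, ← Fintype.sum_prod_type']
  refine Fintype.sum_equiv
    ⟨fun x => (x.1, x.2.2.2.2, x.2.2.1 - x.2.2.2.1, -x.2.2.2.1, x.2.1),
      fun x => (x.1, x.2.2.2.2, x.2.2.1 - x.2.2.2.1, -x.2.2.2.1, x.2.1),
      fun _ => by simp, fun _ => by simp⟩ _ _ ?_
  rintro ⟨i, j, k, q, p⟩
  simp only [Equiv.coe_fn_mk, sub_neg_eq_add, sub_add_cancel, neg_neg]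
  ring

lemma tprod_assoc (A : T3 n1 n2 n3 ℝ) (B : T3 n2 l n3 ℝ) (C : T3 l m n3 ℝ) :
    tprod (tprod A B) C = tprod A (tprod B C) := by
  funext i j k
  simp only [tprod, sum_mul, mul_sum, ← Fintype.sum_prod_type']
  refine Fintype.sum_equiv
    ⟨fun x => (x.2.2.1 + x.1, x.2.2.2, x.1, x.2.1),
      fun x => (x.2.2.1, x.2.2.2, x.1 - x.2.2.1, x.2.1),
      fun _ => by simp, fun _ => by simp⟩ _ _ ?_
  rintro ⟨q, p, q', p'⟩
  simp only [Equiv.coe_fn_mk, add_sub_cancel_right, sub_sub, add_comm q]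
  ring

lemma PartOrth.tInner_tprod_tprod {U : T3 n1 n2 n3 ℝ} (hU : PartOrth U) (X Y : T3 n2 l n3 ℝ) :
    tInner (tprod U X) (tprod U Y) = tInner X Y := by
  rw [tInner_tprod_left, ← tprod_assoc, hU, tI_tprod]

lemma PartOrth.tInner_tprod_tT_tprod_tT {V : T3 n1 n2 n3 ℝ} (hV : PartOrth V)
    (X Y : T3 l n2 n3 ℝ) : tInner (tprod X (tT V)) (tprod Y (tT V)) = tInner X Y := by
  rw [tInner_tprod_right, tT_tT, tprod_assoc, hV, tprod_tI]

/- Parseval turns the ordering of the Fourier-domain diagonal entries into an ordering of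
the norms of the diagonal tubes. -/
lemma OrderedDiag.sum_sq_le {S : T3 n1 n2 n3 ℝ} (hS : OrderedDiag S)
    {i i' : Fin n1} {j j' : Fin n2} (hij : (i : ℕ) = j) (hij' : (i' : ℕ) = j')
    (hle : (i : ℕ) ≤ i') : ∑ k, S i' j' k ^ 2 ≤ ∑ k, S i j k ^ 2 := by
  have hpt : ∀ k, Complex.normSq (hatSlice S k i' j') ≤ Complex.normSq (hatSlice S k i j) := by
    intro k
    obtain ⟨him, hre⟩ := (hS k).1 i j hij
    obtain ⟨him', hre'⟩ := (hS k).1 i' j' hij'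
    rw [Complex.normSq_apply, Complex.normSq_apply, him, him', mul_zero, add_zero, add_zero]
    exact mul_self_le_mul_self hre' ((hS k).2 i i' j j' hij hij' hle)
  have h := sum_le_sum fun k (_ : k ∈ univ) => hpt k
  rw [sum_normSq_hatSlice, sum_normSq_hatSlice] at h
  exact le_of_mul_le_mul_left h (Nat.cast_pos.mpr (NeZero.pos n3))

lemma FDiag.tInner_self_le {S : T3 n1 n2 n3 ℝ} (hF : FDiag S)
    (hO : OrderedDiag S) (hn1 : 0 < n1) (hn2 : 0 < n2) :
    tInner S S ≤ min (n1 : ℝ) n2 * tInner (tube S ⟨0, hn1⟩ ⟨0, hn2⟩) (tube S ⟨0, hn1⟩ ⟨0, hn2⟩) := by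
  rw [tInner_tube_self]
  refine Fin.sum_sum_le_min_mul (fun i j hij => ?_) (fun i j hij => ?_)
  · simp [hF i j _ hij]
  · simpa [sq] using hO.sum_sq_le rfl hij (Nat.zero_le _)

variable {A : T3 n1 n2 n3 ℝ} {U : T3 n1 n1 n3 ℝ} {S : T3 n1 n2 n3 ℝ} {V : T3 n2 n2 n3 ℝ}

lemma IsTSVD.tInner_self (h : IsTSVD A U S V) : tInner A A = tInner S S := by
  obtain ⟨hU, hV, -, rfl⟩ := h
  rw [tprod_assoc, hU.partOrth.tInner_tprod_tprod, hV.partOrth.tInner_tprod_tT_tprod_tT]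

lemma IsTSVD.tprod_right (h : IsTSVD A U S V) : tprod A V = tprod U S := by
  rw [h.2.2.2, tprod_assoc, h.2.1.partOrth, tprod_tI]

lemma IsTSVD.tInner_lat_tprod_tT_lat (h : IsTSVD A U S V) (t : T3 1 1 n3 ℝ) (i : Fin n1)
    (j : Fin n2) :
    tInner (tprod (tprod (lat U i) t) (tT (lat V j))) A = tInner t (tube S i j) := by
  rw [tInner_tprod_right, tT_tT, tprod_lat, h.tprod_right, tInner_tprod_left, tprod_tT_lat_lat,
    ← tprod_assoc, h.1.partOrth, tI_tprod]

lemma IsTSVD.tInner_leadM (hn1 : 0 < n1) (hn2 : 0 < n2) (h : IsTSVD A U S V) :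
    tInner (leadM hn1 hn2 U S V) A = tNorm (tube S ⟨0, hn1⟩ ⟨0, hn2⟩) :=
  (h.tInner_lat_tprod_tT_lat _ _ _).trans (tInner_div_tNorm_self _)

end CyclicIndex

end T3

theorem stmt_9_general (n1 n2 n3 : ℕ) (hn1 : 0 < n1) (hn2 : 0 < n2)
    (A : T3 n1 n2 n3 ℝ) (U : T3 n1 n1 n3 ℝ) (S : T3 n1 n2 n3 ℝ)
    (V : T3 n2 n2 n3 ℝ) (h : IsOrderedTSVD A U S V) :
    tInner (leadM hn1 hn2 U S V) A ≥ tNorm A / Real.sqrt (min n1 n2 : ℝ) := by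
  obtain rfl | hn3 := eq_or_ne n3 0
  · simp [tInner, tNorm]
  have : NeZero n3 := ⟨hn3⟩
  obtain ⟨hsvd, hord⟩ := h
  set t := tube S ⟨0, hn1⟩ ⟨0, hn2⟩
  have hmin : 0 < Real.sqrt (min n1 n2 : ℝ) :=
    Real.sqrt_pos.mpr (lt_min (Nat.cast_pos.mpr hn1) (Nat.cast_pos.mpr hn2))
  rw [ge_iff_le, hsvd.tInner_leadM hn1 hn2, div_le_iff₀ hmin]
  calc tNorm A = Real.sqrt (tInner S S) := by rw [tNorm, hsvd.tInner_self]
    _ ≤ Real.sqrt (min (n1 : ℝ) n2 * tInner t t) :=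
        Real.sqrt_le_sqrt (hsvd.2.2.1.tInner_self_le hord hn1 hn2)
    _ = tNorm t * Real.sqrt (min n1 n2 : ℝ) := by
        rw [Real.sqrt_mul (by positivity), mul_comm, tNorm]

/-- Lemma 2.2: for nonzero `A` with ordered t-SVD and normalized leading
rank-one tensor `M₁`, one has `⟨M₁, A⟩ ≥ ‖A‖_F / √(min(n1,n2))`. -/
theorem stmt_9 (n1 n2 n3 : ℕ) (hn1 : 0 < n1) (hn2 : 0 < n2)
    (A : T3 n1 n2 n3 ℝ) (hA : A ≠ 0) (U : T3 n1 n1 n3 ℝ) (S : T3 n1 n2 n3 ℝ)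
    (V : T3 n2 n2 n3 ℝ) (h : IsOrderedTSVD A U S V) :
    tInner (leadM hn1 hn2 U S V) A ≥ tNorm A / Real.sqrt (min n1 n2 : ℝ) :=
  stmt_9_general n1 n2 n3 hn1 hn2 A U S V h
end

section
/- (Unitary invariance of the t-product) Let V ∈ ℝ^{n2×r×n3} with r ≤ n2 be partially orthogonal and let A ∈ ℝ^{n1×r×n3}. Then ‖A * V^T‖_F = ‖A‖_F. -/
open scoped BigOperators Matrix Kronecker ComplexConjugate
open Complex

open T3

/-!
The block-circulant matrix `bcirc` turns the t-product into the matrix product and the tensor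
transpose into the matrix transpose, and each entry of `A` occurs in it exactly `n3` times, so
`tr (bcirc A * (bcirc A)ᵀ) = n3 ‖A‖_F²`. Partial orthogonality of `V` becomes
`(bcirc V)ᵀ * bcirc V = 1`, whence `bcirc (A * Vᵀ)` and `bcirc A` have the same Gram matrix.
-/

namespace T3

variable {n1 n2 n3 l : ℕ} [NeZero n3]

theorem bcirc_tprod (A : T3 n1 n2 n3 ℝ) (B : T3 n2 l n3 ℝ) :
    bcirc (tprod A B) = bcirc A * bcirc B := by
  ext ⟨p, i⟩ ⟨q, j⟩
  simp only [bcirc, tprod, Matrix.mul_apply, Fintype.sum_prod_type]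
  exact (Fintype.sum_equiv (Equiv.subRight q) _ _ fun x => by
    simp [sub_sub_sub_cancel_right]).symm

theorem bcirc_tT (A : T3 n1 n2 n3 ℝ) : bcirc (tT A) = (bcirc A)ᵀ := by
  ext ⟨p, j⟩ ⟨q, i⟩
  simp [bcirc, tT]

theorem bcirc_tI (q : ℕ) : bcirc (tI q n3) = 1 := by
  ext ⟨p, i⟩ ⟨p', j⟩
  simp [bcirc, tI, Matrix.one_apply, sub_eq_zero, and_comm]

theorem trace_bcirc_mul_transpose (A : T3 n1 n2 n3 ℝ) :
    (bcirc A * (bcirc A)ᵀ).trace = n3 * tInner A A := by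
  have row (p : Fin n3) :
      ∑ i, ∑ q, ∑ j, A i j (p - q) * A i j (p - q) = tInner A A := by
    refine Finset.sum_congr rfl fun i _ => ?_
    rw [Finset.sum_comm]
    exact Finset.sum_congr rfl fun j _ => Fintype.sum_equiv (Equiv.subLeft p) _ _ fun _ => rfl
  simp only [Matrix.trace, Matrix.diag, Matrix.mul_apply, Matrix.transpose_apply, bcirc,
    Fintype.sum_prod_type, row]
  simp

theorem tInner_tprod_tT_self_of_partOrth {r : ℕ} {V : T3 n2 r n3 ℝ} (hV : PartOrth V)
    (A : T3 n1 r n3 ℝ) : tInner (tprod A (tT V)) (tprod A (tT V)) = tInner A A := by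
  have hVV : (bcirc V)ᵀ * bcirc V = 1 := by rw [← bcirc_tT, ← bcirc_tprod, hV, bcirc_tI]
  have h := trace_bcirc_mul_transpose (tprod A (tT V))
  rw [bcirc_tprod, bcirc_tT, Matrix.transpose_mul, Matrix.transpose_transpose, Matrix.mul_assoc,
    ← Matrix.mul_assoc (bcirc V)ᵀ, hVV, Matrix.one_mul, trace_bcirc_mul_transpose] at h
  exact (mul_left_cancel₀ (Nat.cast_ne_zero.mpr (NeZero.ne n3)) h).symm

end T3

theorem stmt_12_general (n1 n2 r n3 : ℕ) (V : T3 n2 r n3 ℝ) (hV : PartOrth V)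
    (A : T3 n1 r n3 ℝ) :
    tNorm (tprod A (tT V)) = tNorm A := by
  rcases Nat.eq_zero_or_pos n3 with rfl | hn3
  · simp [tNorm, tInner]
  · have : NeZero n3 := NeZero.of_pos hn3
    rw [tNorm, tNorm, tInner_tprod_tT_self_of_partOrth hV]

/-- unitary invariance of the t-product: if `V ∈ ℝ^{n2×r×n3}` is
partially orthogonal (`r ≤ n2`) and `A ∈ ℝ^{n1×r×n3}`, then `‖A * Vᵀ‖_F = ‖A‖_F`. -/
theorem stmt_12 (n1 n2 r n3 : ℕ) (hr : r ≤ n2) (V : T3 n2 r n3 ℝ) (hV : PartOrth V)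
    (A : T3 n1 r n3 ℝ) :
    tNorm (tprod A (tT V)) = tNorm A :=
  stmt_12_general n1 n2 r n3 V hV A
end
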